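/- Let A, B be bounded operators on a complex Hilbert space, q ∈ [0,1), and let x, y be unit vectors with ⟨x, y⟩ = q. Then |⟨(AB + BA)x, y⟩| ≤ q(|⟨ABx, x⟩| + |⟨BAx, x⟩|) + 2√(1-q²)·‖A‖·‖B‖. -/

import Mathlib

/-!
Write `y = ⟪x, y⟫ x + w` with `w ⟂ x`, so that `‖w‖ = √(1 - q²)`. Pairing `(AB + BA) x` with the two
pieces gives `q ⟪(AB + BA) x, x⟫` plus a term bounded by Cauchy–Schwarz by
`‖(AB + BA) x‖ ‖w‖ ≤ 2 ‖A‖ ‖B‖ √(1 - q²)`.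
-/

open scoped InnerProductSpace

section

variable {𝕜 E : Type*} [RCLike 𝕜] [NormedAddCommGroup E] [InnerProductSpace 𝕜 E]

lemma norm_sub_inner_smul_sq_of_norm_eq_one {x : E} (hx : ‖x‖ = 1) (y : E) :
    ‖y - ⟪x, y⟫_𝕜 • x‖ ^ 2 = ‖y‖ ^ 2 - ‖⟪x, y⟫_𝕜‖ ^ 2 := by
  have hre : ⟪y, ⟪x, y⟫_𝕜 • x⟫_𝕜 = (‖⟪x, y⟫_𝕜‖ : 𝕜) ^ 2 := by
    rw [inner_smul_right, ← inner_conj_symm x y, RCLike.conj_mul, RCLike.norm_conj]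
  rw [norm_sub_sq (𝕜 := 𝕜), hre, norm_smul, hx]
  norm_cast
  ring

lemma norm_inner_le_of_norm_eq_one {x : E} (hx : ‖x‖ = 1) (y u : E) :
    ‖⟪u, y⟫_𝕜‖ ≤ ‖⟪x, y⟫_𝕜‖ * ‖⟪u, x⟫_𝕜‖ + √(‖y‖ ^ 2 - ‖⟪x, y⟫_𝕜‖ ^ 2) * ‖u‖ := by
  set w := y - ⟪x, y⟫_𝕜 • x
  have hw : ‖w‖ = √(‖y‖ ^ 2 - ‖⟪x, y⟫_𝕜‖ ^ 2) := by
    rw [← norm_sub_inner_smul_sq_of_norm_eq_one hx, Real.sqrt_sq (norm_nonneg _)]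
  have hsplit : ⟪u, y⟫_𝕜 = ⟪x, y⟫_𝕜 * ⟪u, x⟫_𝕜 + ⟪u, w⟫_𝕜 := by
    rw [← inner_smul_right, ← inner_add_right, add_sub_cancel]
  calc ‖⟪u, y⟫_𝕜‖ ≤ ‖⟪x, y⟫_𝕜 * ⟪u, x⟫_𝕜‖ + ‖⟪u, w⟫_𝕜‖ := hsplit ▸ norm_add_le _ _
    _ ≤ ‖⟪x, y⟫_𝕜‖ * ‖⟪u, x⟫_𝕜‖ + ‖w‖ * ‖u‖ := by
      rw [norm_mul, mul_comm ‖w‖]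
      gcongr
      exact norm_inner_le_norm u w
    _ = _ := by rw [hw]

end

lemma ContinuousLinearMap.norm_comp_add_comp_apply_le {𝕜 E : Type*} [NontriviallyNormedField 𝕜]
    [SeminormedAddCommGroup E] [NormedSpace 𝕜 E] (A B : E →L[𝕜] E) (x : E) :
    ‖(A ∘L B + B ∘L A) x‖ ≤ 2 * ‖A‖ * ‖B‖ * ‖x‖ :=
  calc ‖(A ∘L B + B ∘L A) x‖ ≤ ‖A ∘L B + B ∘L A‖ * ‖x‖ := le_opNorm _ x
    _ ≤ (‖A‖ * ‖B‖ + ‖B‖ * ‖A‖) * ‖x‖ := by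
      gcongr
      exact (norm_add_le _ _).trans (add_le_add (opNorm_comp_le A B) (opNorm_comp_le B A))
    _ = 2 * ‖A‖ * ‖B‖ * ‖x‖ := by ring

theorem stmt_14_general {H : Type*} [NormedAddCommGroup H] [InnerProductSpace ℂ H]
    (A B : H →L[ℂ] H) (q : ℝ) (hq0 : 0 ≤ q)
    (x y : H) (hx : ‖x‖ = 1) (hy : ‖y‖ = 1) (hxy : (inner ℂ x y : ℂ) = (q : ℂ)) :
    ‖(inner ℂ ((A ∘L B + B ∘L A) x) y : ℂ)‖ ≤
      q * (‖(inner ℂ ((A ∘L B) x) x : ℂ)‖ + ‖(inner ℂ ((B ∘L A) x) x : ℂ)‖) +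
        2 * Real.sqrt (1 - q ^ 2) * ‖A‖ * ‖B‖ := by
  have hq : ‖(inner ℂ x y : ℂ)‖ = q := by rw [hxy, Complex.norm_real, Real.norm_of_nonneg hq0]
  have hdiag : ‖(inner ℂ ((A ∘L B + B ∘L A) x) x : ℂ)‖ ≤
      ‖(inner ℂ ((A ∘L B) x) x : ℂ)‖ + ‖(inner ℂ ((B ∘L A) x) x : ℂ)‖ := by
    rw [add_apply, inner_add_left]
    exact norm_add_le _ _
  have hnorm := (A.norm_comp_add_comp_apply_le B x).trans_eq (by rw [hx, mul_one])
  have hproj := norm_inner_le_of_norm_eq_one (𝕜 := ℂ) hx y ((A ∘L B + B ∘L A) x)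
  rw [hq, hy, one_pow] at hproj
  calc _ ≤ q * ‖(inner ℂ ((A ∘L B + B ∘L A) x) x : ℂ)‖ + √(1 - q ^ 2) * (2 * ‖A‖ * ‖B‖) := by
        refine hproj.trans ?_
        gcongr
    _ ≤ _ := by
      rw [show √(1 - q ^ 2) * (2 * ‖A‖ * ‖B‖) = 2 * √(1 - q ^ 2) * ‖A‖ * ‖B‖ by ring]
      gcongr

theorem stmt_14 {H : Type*} [NormedAddCommGroup H] [InnerProductSpace ℂ H] [CompleteSpace H]
    (A B : H →L[ℂ] H) (q : ℝ) (hq0 : 0 ≤ q) (hq1 : q < 1)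
    (x y : H) (hx : ‖x‖ = 1) (hy : ‖y‖ = 1) (hxy : (inner ℂ x y : ℂ) = (q : ℂ)) :
    ‖(inner ℂ ((A ∘L B + B ∘L A) x) y : ℂ)‖ ≤
      q * (‖(inner ℂ ((A ∘L B) x) x : ℂ)‖ + ‖(inner ℂ ((B ∘L A) x) x : ℂ)‖) +
        2 * Real.sqrt (1 - q ^ 2) * ‖A‖ * ‖B‖ :=
  stmt_14_general A B q hq0 x y hx hy hxy
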